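/- Let β₁, β₂, σ > 0 and α ∈ (1/2, 1). Define Q(r) = (2β₂/σ²)·(β₁ r^{1-2α}/(β₂(1-2α)) - r^{2-2α}/(2-2α)) for r > 0. Then ∫_0^∞ r^{-2α}·exp(Q(r)) dr < ∞. -/
import Mathlib


open Real MeasureTheory Set

theorem ckls_stationary_density_integrable
    (β₁ β₂ σ α : ℝ) (hβ₁ : 0 < β₁) (hβ₂ : 0 < β₂) (hσ : 0 < σ)
    (hα : α ∈ Ioo (1/2 : ℝ) 1)
    (Q : ℝ → ℝ)
    (hQ : ∀ r > (0:ℝ), Q r = (2 * β₂ / σ ^ 2) *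
      (β₁ * r ^ (1 - 2 * α) / (β₂ * (1 - 2 * α)) - r ^ (2 - 2 * α) / (2 - 2 * α))) :
    ∫⁻ r in Ioi (0:ℝ), ENNReal.ofReal (r ^ (-(2 * α)) * Real.exp (Q r)) < ⊤ := by
  obtain ⟨hα1, hα2⟩ := hα
  have h2α : (1:ℝ) < 2 * α := by linarith
  set c : ℝ := 2 * β₁ / (σ ^ 2 * (2 * α - 1)) with hc
  have hc0 : 0 < c := by
    exact div_pos (by linarith) (mul_pos (pow_pos hσ 2) (by linarith))
  -- key bound : Q r ≤ -c * r ^ (1 - 2*α) for r > 0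
  have key : ∀ r : ℝ, 0 < r → Q r ≤ -c * r ^ (1 - 2 * α) := by
    intro r hr
    rw [hQ r hr]
    have h1 : (2 * β₂ / σ ^ 2) * (β₁ * r ^ (1 - 2 * α) / (β₂ * (1 - 2 * α)))
        = -c * r ^ (1 - 2 * α) := by
      have hσ2 : σ ^ 2 ≠ 0 := by positivity
      have h12 : (1 - 2 * α) ≠ 0 := by intro h; nlinarith
      have h21 : (2 * α - 1) ≠ 0 := by intro h; nlinarith
      rw [hc]
      field_simp
      ring
    have h2 : 0 ≤ (2 * β₂ / σ ^ 2) * (r ^ (2 - 2 * α) / (2 - 2 * α)) := by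
      have : (0:ℝ) < 2 - 2 * α := by linarith
      have hrp : (0:ℝ) ≤ r ^ (2 - 2 * α) := (Real.rpow_pos_of_pos hr _).le
      positivity
    nlinarith [mul_sub (2 * β₂ / σ ^ 2) (β₁ * r ^ (1 - 2 * α) / (β₂ * (1 - 2 * α)))
      (r ^ (2 - 2 * α) / (2 - 2 * α))]
  -- bound exp(-x) ≤ 4 / x^2 for x ≥ 0
  have expbound : ∀ x : ℝ, 0 ≤ x → Real.exp (-x) ≤ 4 / x ^ 2 ∨ x = 0 := by
    intro x hx
    rcases eq_or_lt_of_le hx with h | h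
    · exact Or.inr h.symm
    · left
      have h1 : x / 2 + 1 ≤ Real.exp (x / 2) := Real.add_one_le_exp _
      have h2 : (x / 2) ^ 2 ≤ (x / 2 + 1) ^ 2 := by nlinarith
      have h3 : (x / 2) ^ 2 ≤ Real.exp (x / 2) ^ 2 := le_trans h2 (by nlinarith [Real.exp_pos (x/2)])
      have h4 : Real.exp (x / 2) ^ 2 = Real.exp x := by
        rw [sq, ← Real.exp_add]; congr 1; ring
      have h5 : x ^ 2 / 4 ≤ Real.exp x := by rw [← h4]; nlinarith
      rw [Real.exp_neg, inv_eq_one_div, div_le_div_iff₀ (Real.exp_pos x) (by positivity)]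
      nlinarith
  -- setup
  set F : ℝ → ENNReal := fun r => ENNReal.ofReal (r ^ (-(2 * α)) * Real.exp (Q r)) with hF
  have hsplit : Ioi (0:ℝ) = Ioc (0:ℝ) 1 ∪ Ioi (1:ℝ) := (Ioc_union_Ioi_eq_Ioi zero_le_one).symm
  rw [hsplit, lintegral_union measurableSet_Ioi (Ioc_disjoint_Ioi le_rfl)]
  -- first piece
  have b1 : ∫⁻ r in Ioc (0:ℝ) 1, F r
      ≤ ∫⁻ r in Ioc (0:ℝ) 1, ENNReal.ofReal (4 / c ^ 2 * r ^ (2 * α - 2)) := by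
    apply setLIntegral_mono
    · exact (measurable_const.mul (measurable_id'.pow_const _)).ennreal_ofReal
    · intro r hr
      apply ENNReal.ofReal_le_ofReal
      have hr0 : 0 < r := hr.1
      have hQr := key r hr0
      have hrp : 0 < r ^ (1 - 2 * α) := Real.rpow_pos_of_pos hr0 _
      have hx : 0 ≤ c * r ^ (1 - 2 * α) := by positivity
      have hexp : Real.exp (Q r) ≤ 4 / (c * r ^ (1 - 2 * α)) ^ 2 := by
        rcases expbound (c * r ^ (1 - 2 * α)) hx with h | h
        · calc Real.exp (Q r) ≤ Real.exp (-(c * r ^ (1 - 2 * α))) := by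
                apply Real.exp_le_exp.2; linarith [hQr]
            _ ≤ _ := h
        · exfalso; nlinarith
      have hpow : 0 < r ^ (-(2 * α)) := Real.rpow_pos_of_pos hr0 _
      calc r ^ (-(2 * α)) * Real.exp (Q r)
          ≤ r ^ (-(2 * α)) * (4 / (c * r ^ (1 - 2 * α)) ^ 2) := by
            exact mul_le_mul_of_nonneg_left hexp hpow.le
        _ = 4 / c ^ 2 * r ^ (2 * α - 2) := by
            have e1 : (r ^ (1 - 2 * α)) ^ 2 = r ^ (2 - 4 * α) := by
              rw [sq, ← Real.rpow_add hr0]; ring_nf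
            have e2 : r ^ (2 * α - 2) * r ^ (2 - 4 * α) = r ^ (-(2 * α)) := by
              rw [← Real.rpow_add hr0]; ring_nf
            have h24 : r ^ (2 - 4 * α) ≠ 0 := (Real.rpow_pos_of_pos hr0 _).ne'
            rw [mul_pow, e1, ← e2]
            field_simp
  -- second piece
  have b2 : ∫⁻ r in Ioi (1:ℝ), F r ≤ ∫⁻ r in Ioi (1:ℝ), ENNReal.ofReal (r ^ (-(2 * α))) := by
    apply setLIntegral_mono
    · exact (measurable_id'.pow_const _).ennreal_ofReal
    · intro r hr
      apply ENNReal.ofReal_le_ofReal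
      have hr0 : (0:ℝ) < r := lt_trans one_pos hr
      have hQr := key r hr0
      have hrp : 0 < r ^ (1 - 2 * α) := Real.rpow_pos_of_pos hr0 _
      have : Real.exp (Q r) ≤ 1 := by
        rw [← Real.exp_zero]
        apply Real.exp_le_exp.2
        nlinarith
      nlinarith [Real.rpow_pos_of_pos hr0 (-(2*α)), Real.exp_pos (Q r)]
  -- finiteness of bounds
  have fin1 : ∫⁻ r in Ioc (0:ℝ) 1, ENNReal.ofReal (4 / c ^ 2 * r ^ (2 * α - 2)) < ⊤ := by
    have hI : IntegrableOn (fun r : ℝ => 4 / c ^ 2 * r ^ (2 * α - 2)) (Ioc (0:ℝ) 1) := by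
      exact IntegrableOn.mono_set
        (((intervalIntegral.integrableOn_Ioo_rpow_iff two_pos).2 (by linarith)).const_mul _)
        (Ioc_subset_Ioo_right one_lt_two)
    have := hI.hasFiniteIntegral
    refine lt_of_le_of_lt (lintegral_mono fun r => ?_) this
    exact Real.ofReal_le_enorm _
  have fin2 : ∫⁻ r in Ioi (1:ℝ), ENNReal.ofReal (r ^ (-(2 * α))) < ⊤ := by
    have hI : IntegrableOn (fun r : ℝ => r ^ (-(2 * α))) (Ioi (1:ℝ)) :=
      integrableOn_Ioi_rpow_of_lt (by linarith) one_pos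
    have := hI.hasFiniteIntegral
    refine lt_of_le_of_lt (lintegral_mono fun r => ?_) this
    exact Real.ofReal_le_enorm _
  exact ENNReal.add_lt_top.2 ⟨lt_of_le_of_lt b1 fin1, lt_of_le_of_lt b2 fin2⟩
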